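/- arXiv:1703.10453 — 8 statements merged into one kernel-verified Lean document; each statement's English description precedes it below -/
import Mathlib

section
/- Let T > 0, let g : [0,T] → ℝ be continuous and nonnegative, let R : ℝ → ℝ be locally Lipschitz, let k > 0 be such that R(x) ≤ 0 for all x ≥ k, and suppose there exists a locally Lipschitz function S : ℝ → ℝ with R(x) ≥ x·S(x) for all x ∈ ℝ. If C : [0,T] → ℝ is differentiable with C'(t) = R(C(t)) − C(t)·g(t) for all t ∈ [0,T] and C(0) = C₀ > 0, then for every t ∈ [0,T] one has 0 < C(t) ≤ max(C₀, k). -/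
open Set intervalIntegral

/-- A priori positivity and boundedness of the lipoprotein concentration `C` solving
`C' = R(C) - C·g` on `[0,T]` with `C(0) = C₀ > 0`. -/
theorem stmt0 (T : ℝ) (hT : 0 < T) (g R S C : ℝ → ℝ) (C₀ k : ℝ)
    (hg : ContinuousOn g (Set.Icc 0 T)) (hgnn : ∀ t ∈ Set.Icc 0 T, 0 ≤ g t)
    (hR : LocallyLipschitz R)
    (hk : 0 < k) (hRk : ∀ x, k ≤ x → R x ≤ 0)
    (hS : LocallyLipschitz S) (hRS : ∀ x, x * S x ≤ R x)
    (hC : ∀ t ∈ Set.Icc 0 T, HasDerivAt C (R (C t) - C t * g t) t)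
    (hC0 : C 0 = C₀) (hC₀ : 0 < C₀) :
    ∀ t ∈ Set.Icc 0 T, 0 < C t ∧ C t ≤ max C₀ k := by
  set B := max C₀ k with hB
  have hkB : k ≤ B := le_max_right _ _
  have hC₀B : C₀ ≤ B := le_max_left _ _
  have hCcontAt : ∀ t ∈ Icc 0 T, ContinuousAt C t := fun t ht => (hC t ht).continuousAt
  have hCcont : ContinuousOn C (Icc 0 T) := fun t ht => (hCcontAt t ht).continuousWithinAt
  -- the auxiliary continuous function h = g - S ∘ C
  set h : ℝ → ℝ := fun s => g s - S (C s) with hh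
  have hhcont : ContinuousOn h (Icc 0 T) :=
    hg.sub (hS.continuous.comp_continuousOn hCcont)
  -- upper bound
  have hupper : ∀ t ∈ Icc 0 T, C t ≤ B := by
    intro t ht
    by_contra hcon
    push_neg at hcon
    set A : Set ℝ := {s | s ∈ Icc 0 t ∧ C s ≤ B} with hA
    have h0A : (0 : ℝ) ∈ A := ⟨⟨le_rfl, ht.1⟩, by rw [hC0]; exact hC₀B⟩
    have hAne : A.Nonempty := ⟨0, h0A⟩
    have hAbdd : BddAbove A := ⟨t, fun s hs => hs.1.2⟩
    set t₀ := sSup A with ht₀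
    have ht₀0 : 0 ≤ t₀ := le_csSup hAbdd h0A
    have ht₀t : t₀ ≤ t := csSup_le hAne fun s hs => hs.1.2
    have ht₀T : t₀ ∈ Icc 0 T := ⟨ht₀0, ht₀t.trans ht.2⟩
    have hCt₀ : C t₀ ≤ B := by
      by_contra hc
      push_neg at hc
      have hev : {s | B < C s} ∈ nhds t₀ :=
        (hCcontAt t₀ ht₀T).preimage_mem_nhds (Ioi_mem_nhds hc)
      have hclos : t₀ ∈ closure A := csSup_mem_closure hAne hAbdd
      rcases (mem_closure_iff_nhds.1 hclos) _ hev with ⟨s, hs1, hs2⟩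
      exact absurd hs2.2 (not_le.2 hs1)
    have hmid : ∀ s ∈ Ioo t₀ t, B < C s := by
      intro s hs
      by_contra hc
      push_neg at hc
      have : s ∈ A := ⟨⟨ht₀0.trans hs.1.le, hs.2.le⟩, hc⟩
      exact absurd (le_csSup hAbdd this) (not_le.2 hs.1)
    have hsub : Icc t₀ t ⊆ Icc 0 T := Icc_subset_Icc ht₀0 ht.2
    have hanti : AntitoneOn C (Icc t₀ t) := by
      apply antitoneOn_of_deriv_nonpos (convex_Icc t₀ t) (hCcont.mono hsub)
      · rw [interior_Icc]
        intro s hs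
        exact ((hC s (hsub (Ioo_subset_Icc_self hs))).differentiableAt).differentiableWithinAt
      · rw [interior_Icc]
        intro s hs
        have hsT : s ∈ Icc 0 T := hsub (Ioo_subset_Icc_self hs)
        rw [(hC s hsT).deriv]
        have hBs : B < C s := hmid s hs
        have h1 : R (C s) ≤ 0 := hRk _ (hkB.trans hBs.le)
        have h2 : 0 ≤ C s * g s :=
          mul_nonneg (le_of_lt (lt_of_lt_of_le (lt_of_lt_of_le hk hkB) hBs.le)) (hgnn s hsT)
        linarith
    have := hanti (left_mem_Icc.2 ht₀t) (right_mem_Icc.2 ht₀t) ht₀t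
    exact absurd (this.trans hCt₀) (not_le.2 hcon)
  -- positivity via integrating factor
  have hlower : ∀ t ∈ Icc 0 T, 0 < C t := by
    set E : ℝ → ℝ := fun t => ∫ s in (0:ℝ)..t, h s with hE
    set F : ℝ → ℝ := fun t => C t * Real.exp (E t) with hF
    have hEcont : ContinuousOn E (Icc 0 T) := by
      have hint : MeasureTheory.IntegrableOn h (uIcc 0 T) := by
        rw [uIcc_of_le hT.le]; exact hhcont.integrableOn_Icc
      simpa [uIcc_of_le hT.le] using continuousOn_primitive_interval hint
    have hFcont : ContinuousOn F (Icc 0 T) :=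
      hCcont.mul (Real.continuous_exp.comp_continuousOn hEcont)
    have hED : ∀ s ∈ Ioo 0 T, HasDerivAt E (h s) s := by
      intro s hs
      have hint : IntervalIntegrable h MeasureTheory.volume 0 s := by
        apply ContinuousOn.intervalIntegrable
        apply hhcont.mono
        rw [uIcc_of_le hs.1.le]
        exact Icc_subset_Icc le_rfl hs.2.le
      have hmeas : StronglyMeasurableAtFilter h (nhds s) :=
        ContinuousOn.stronglyMeasurableAtFilter isOpen_Ioo
          (hhcont.mono Ioo_subset_Icc_self) s hs
      exact integral_hasDerivAt_right hint hmeas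
        ((hhcont s (Ioo_subset_Icc_self hs)).continuousAt (Icc_mem_nhds hs.1 hs.2))
    have hFD : ∀ s ∈ Ioo 0 T, HasDerivAt F
        ((R (C s) - C s * g s) * Real.exp (E s) + C s * (Real.exp (E s) * h s)) s := by
      intro s hs
      exact ((hC s (Ioo_subset_Icc_self hs)).mul ((hED s hs).exp))
    have hmono : MonotoneOn F (Icc 0 T) := by
      apply monotoneOn_of_deriv_nonneg (convex_Icc 0 T) hFcont
      · rw [interior_Icc]
        exact fun s hs => (hFD s hs).differentiableAt.differentiableWithinAt
      · rw [interior_Icc]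
        intro s hs
        rw [(hFD s hs).deriv]
        have h1 : 0 ≤ R (C s) - C s * S (C s) := sub_nonneg.2 (hRS (C s))
        have h2 : (0:ℝ) < Real.exp (E s) := Real.exp_pos _
        have : (R (C s) - C s * g s) * Real.exp (E s) + C s * (Real.exp (E s) * h s)
            = Real.exp (E s) * (R (C s) - C s * S (C s)) := by
          simp only [hh]; ring
        rw [this]
        positivity
    intro t ht
    have hF0 : F 0 = C₀ := by
      simp only [hF, hE, intervalIntegral.integral_same, Real.exp_zero, hC0, mul_one]
    have h1 : C₀ ≤ F t := by
      rw [← hF0]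
      exact hmono (left_mem_Icc.2 hT.le) ht ht.1
    have h2 : 0 < C t * Real.exp (E t) := lt_of_lt_of_le hC₀ h1
    by_contra hc
    push_neg at hc
    exact absurd h2 (not_lt.2 (mul_nonpos_of_nonpos_of_nonneg hc (Real.exp_pos _).le))
  exact fun t ht => ⟨hlower t ht, hupper t ht⟩
end

section
/- Let μ, V : [0,∞) → ℝ be continuous with V(a) > 0 for all a ≥ 0, let C* > 0 and M₀ ∈ ℝ, and define M*(a) = M₀ · (V(0)/V(a)) · exp(−(1/C*)·∫₀^a μ(u)/V(u) du). Then M*(0) = M₀, the function a ↦ V(a)·M*(a) is differentiable on [0,∞), and for every a ≥ 0 one has C* · (d/da)(V(a)·M*(a)) + μ(a)·M*(a) = 0. -/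
/-!
On `[0, ∞)` the product `V · M*` is `M₀ V(0) exp(-(1/C*) ∫₀^a μ/V)`, so by the fundamental theorem
of calculus and the chain rule its derivative is `-(μ/(C* V)) · V M* = -μ M*/C*`.
-/
open Set Topology

theorem ContinuousOn.hasDerivWithinAt_intervalIntegral_Ici {E : Type*} [NormedAddCommGroup E]
    [NormedSpace ℝ E] [CompleteSpace E] {f : ℝ → E} {a₀ a : ℝ}
    (hf : ContinuousOn f (Ici a₀)) (ha : a₀ ≤ a) :
    HasDerivWithinAt (fun b => ∫ u in a₀..b, f u) (f a) (Ici a₀) a := by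
  have ha_mem : Fact (a ∈ Icc a₀ (a + 1)) := ⟨⟨ha, by linarith⟩⟩
  have hf' : ContinuousOn f (Icc a₀ (a + 1)) := hf.mono Icc_subset_Ici_self
  have hIcc : Icc a₀ (a + 1) ∈ 𝓝[Ici a₀] a :=
    mem_nhdsWithin.2 ⟨Iio (a + 1), isOpen_Iio, by simp, fun x hx => ⟨hx.2, hx.1.le⟩⟩
  refine HasDerivWithinAt.mono_of_mem_nhdsWithin ?_ hIcc
  exact intervalIntegral.integral_hasDerivWithinAt_right
    (hf'.mono (uIcc_of_le ha ▸ Icc_subset_Icc_right (by linarith))).intervalIntegrable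
    (hf'.stronglyMeasurableAtFilter_nhdsWithin measurableSet_Icc a)
    (hf'.continuousWithinAt ha_mem.out)

/-- Explicit solution of the stationary transport equation: with
`M*(a) = M₀ (V(0)/V(a)) exp(−(1/C*)∫₀^a μ/V)`, one has `M*(0) = M₀`, the function
`a ↦ V(a) M*(a)` is differentiable on `[0,∞)` and its derivative `d` satisfies
`C* d + μ(a) M*(a) = 0` at every `a ≥ 0`. -/
theorem stmt5 (μ V : ℝ → ℝ)
    (hμcont : ContinuousOn μ (Set.Ici 0)) (hVcont : ContinuousOn V (Set.Ici 0))
    (hVpos : ∀ a, 0 ≤ a → 0 < V a)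
    (Cstar M₀ : ℝ) (hCstar : 0 < Cstar)
    (Mstar : ℝ → ℝ)
    (hMstar : ∀ a, Mstar a =
      M₀ * (V 0 / V a) * Real.exp (-(1 / Cstar) * ∫ u in (0:ℝ)..a, μ u / V u)) :
    Mstar 0 = M₀ ∧
    ∀ a, 0 ≤ a → ∃ d : ℝ,
      HasDerivWithinAt (fun b => V b * Mstar b) d (Set.Ici 0) a ∧
      Cstar * d + μ a * Mstar a = 0 := by
  have hV0 : V 0 ≠ 0 := (hVpos 0 le_rfl).ne'
  refine ⟨by simp [hMstar, hV0], fun a ha => ?_⟩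
  have hF : HasDerivWithinAt (fun b => ∫ u in (0:ℝ)..b, μ u / V u) (μ a / V a) (Ici 0) a :=
    (hμcont.div hVcont fun x hx => (hVpos x hx).ne').hasDerivWithinAt_intervalIntegral_Ici ha
  have hVM : EqOn (fun b => V b * Mstar b)
      (fun b => M₀ * V 0 * Real.exp (-(1 / Cstar) * ∫ u in (0:ℝ)..b, μ u / V u)) (Ici 0) :=
    fun b hb => by
      have hVb : V b ≠ 0 := (hVpos b hb).ne'
      simp only [hMstar b]
      field_simp
  refine ⟨_, (((hF.const_mul _).exp).const_mul _).congr hVM (hVM ha), ?_⟩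
  rw [hMstar a]
  field_simp
  ring
end

section
/- Let α, V, μ, γ, β > 0. Then there exists a unique pair (M*, C*) with M* > 0 and C* > 0 such that α·V·C*² − μ·M* = 0 and γ − β·C* − V·C*·M* = 0. -/
/-! Eliminating `M = α V C² / μ` from the first equation turns the second into
`β C + (α V² / μ) C³ = γ`. Its left side is a strictly increasing continuous function of `C`
vanishing at `0`, so it takes the value `γ > 0` exactly once, at a positive `C`. -/

theorem strictMono_linear_add_cubic {b k : ℝ} (hb : 0 ≤ b) (hk : 0 < k) :
    StrictMono fun c : ℝ => b * c + k * c ^ 3 :=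
  (monotone_id.const_mul hb).add_strictMono ((Odd.strictMono_pow (by decide)).const_mul hk)

theorem existsUnique_pos_linear_add_cubic_eq {b k γ : ℝ} (hb : 0 ≤ b) (hk : 0 < k)
    (hγ : 0 < γ) : ∃! c : ℝ, 0 < c ∧ b * c + k * c ^ 3 = γ := by
  set f : ℝ → ℝ := fun c => b * c + k * c ^ 3
  have hmono : StrictMono f := strictMono_linear_add_cubic hb hk
  -- At `x = 1 + γ / k` already the cubic term exceeds `γ`, since `x³ ≥ x`.
  set x := 1 + γ / k
  have hx : 1 ≤ x := le_add_of_nonneg_right (div_pos hγ hk).le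
  have hfx : γ ≤ f x :=
    calc γ ≤ k + γ := le_add_of_nonneg_left hk.le
      _ = k * x := by rw [mul_add, mul_one, mul_div_cancel₀ _ hk.ne']
      _ ≤ k * x ^ 3 := mul_le_mul_of_nonneg_left (le_self_pow₀ hx (by norm_num)) hk.le
      _ ≤ f x := le_add_of_nonneg_left (mul_nonneg hb (zero_le_one.trans hx))
  have hf0 : f 0 = 0 := by simp [f]
  have hcont : Continuous f := by fun_prop
  obtain ⟨c, -, hfc⟩ := intermediate_value_Icc (zero_le_one.trans hx) hcont.continuousOn
    ⟨hf0.trans_le hγ.le, hfx⟩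
  have hc : 0 < c := hmono.lt_iff_lt.mp (by rw [hf0, hfc]; exact hγ)
  exact ⟨c, ⟨hc, hfc⟩, fun c' hc' => hmono.injective (hc'.2.trans hfc.symm)⟩

theorem stationary_iff_cubic {α V μ γ β M C : ℝ} (hμ : μ ≠ 0) :
    (α * V * C ^ 2 - μ * M = 0 ∧ γ - β * C - V * C * M = 0) ↔
      (M = α * V * C ^ 2 / μ ∧ β * C + α * V ^ 2 / μ * C ^ 3 = γ) := by
  constructor
  · rintro ⟨h₁, h₂⟩
    have hM : M = α * V * C ^ 2 / μ := by field_simp; linarith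
    refine ⟨hM, ?_⟩
    rw [hM] at h₂
    field_simp at h₂ ⊢
    linarith
  · rintro ⟨rfl, h⟩
    constructor
    · field_simp; ring
    · rw [← h]; field_simp; ring

/-- Existence and uniqueness of the positive stationary state of the planar system
`M' = α V C² − μ M`, `C' = γ − β C − V C M`. -/
theorem stmt8 (α V μ γ β : ℝ) (hα : 0 < α) (hV : 0 < V) (hμ : 0 < μ) (hγ : 0 < γ) (hβ : 0 < β) :
    ∃! p : ℝ × ℝ, 0 < p.1 ∧ 0 < p.2 ∧
      α * V * p.2 ^ 2 - μ * p.1 = 0 ∧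
      γ - β * p.2 - V * p.2 * p.1 = 0 := by
  obtain ⟨c, ⟨hc, hfc⟩, huniq⟩ :=
    existsUnique_pos_linear_add_cubic_eq (k := α * V ^ 2 / μ) hβ.le (by positivity) hγ
  refine ⟨(α * V * c ^ 2 / μ, c), ⟨by positivity, hc, (stationary_iff_cubic hμ.ne').mpr ⟨rfl, hfc⟩⟩, ?_⟩
  rintro ⟨M, C⟩ ⟨-, hC, hsys⟩
  obtain ⟨hM, hfC⟩ := (stationary_iff_cubic hμ.ne').mp hsys
  obtain rfl : C = c := huniq C ⟨hC, hfC⟩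
  exact Prod.ext hM rfl
end

section
/- Let α, V, μ, γ, β > 0 and let (M*, C*) with M* > 0, C* > 0 satisfy α·V·C*² = μ·M* and γ = β·C* + V·C*·M*. Let M, C : [0,∞) → ℝ be differentiable with M'(t) = α·V·C(t)² − μ·M(t) and C'(t) = γ − β·C(t) − V·C(t)·M(t) for all t ≥ 0. Then the function L(t) := (M(t) − M*)² + 2α·(C(t) − C*)² satisfies, for every t ≥ 0, L'(t) = −2μ·(M(t) − M*)² − 4αβ·(C(t) − C*)² − 2α·V·(C(t) − C*)²·(M(t) + M*). In particular, if M(t) ≥ 0 for all t, then L'(t) < 0 whenever (M(t), C(t)) ≠ (M*, C*). -/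
/-!
Along a trajectory `L' = 2(M − M*)M' + 4α(C − C*)C'`. Rewriting the right-hand sides of the system
in deviations from the equilibrium (via `αVC*² = μM*` and `γ = βC* + VC*M*`), the weight `2α` makes
the mixed terms in `(M − M*)(C − C*)` collapse into `−2αV(C − C*)²(M + M*)`, so `L'` is a sum of
nonpositive terms, which for `M ≥ 0` vanishes only at the equilibrium.
-/

theorem HasDerivAt.lyapunov {M C : ℝ → ℝ} {M' C' t : ℝ} (α Mstar Cstar : ℝ)
    (hM : HasDerivAt M M' t) (hC : HasDerivAt C C' t) :
    HasDerivAt (fun s => (M s - Mstar) ^ 2 + 2 * α * (C s - Cstar) ^ 2)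
      (2 * (M t - Mstar) * M' + 2 * α * (2 * (C t - Cstar) * C')) t := by
  refine (((hM.sub_const Mstar).pow 2).add
    (((hC.sub_const Cstar).pow 2).const_mul (2 * α))).congr_deriv ?_
  norm_num

theorem lyapunov_dissipation_eq {α V μ γ β Mstar Cstar : ℝ}
    (heq1 : α * V * Cstar ^ 2 = μ * Mstar) (heq2 : γ = β * Cstar + V * Cstar * Mstar)
    (m c : ℝ) :
    2 * (m - Mstar) * (α * V * c ^ 2 - μ * m) + 2 * α * (2 * (c - Cstar) * (γ - β * c - V * c * m))
      = -2 * μ * (m - Mstar) ^ 2 - 4 * α * β * (c - Cstar) ^ 2 -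
        2 * α * V * (c - Cstar) ^ 2 * (m + Mstar) := by
  subst heq2
  linear_combination (2 * m - 2 * Mstar) * heq1

theorem lyapunov_dissipation_neg {α V μ β Mstar Cstar m c : ℝ}
    (hα : 0 < α) (hV : 0 < V) (hμ : 0 < μ) (hβ : 0 < β) (hMstar : 0 ≤ Mstar) (hm : 0 ≤ m)
    (hne : (m, c) ≠ (Mstar, Cstar)) :
    -2 * μ * (m - Mstar) ^ 2 - 4 * α * β * (c - Cstar) ^ 2 -
      2 * α * V * (c - Cstar) ^ 2 * (m + Mstar) < 0 := by
  have hsquares : 0 < μ * (m - Mstar) ^ 2 + α * β * (c - Cstar) ^ 2 := by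
    rcases not_and_or.mp (by simpa only [ne_eq, Prod.mk.injEq] using hne) with hm' | hc'
    · exact add_pos_of_pos_of_nonneg (mul_pos hμ (sq_pos_of_ne_zero (sub_ne_zero.mpr hm')))
        (by positivity)
    · exact add_pos_of_nonneg_of_pos (by positivity)
        (mul_pos (mul_pos hα hβ) (sq_pos_of_ne_zero (sub_ne_zero.mpr hc')))
  have hcoupling : 0 ≤ α * β * (c - Cstar) ^ 2 := by positivity
  have hcubic : 0 ≤ α * V * (c - Cstar) ^ 2 * (m + Mstar) := by positivity
  linarith

theorem stmt9_general (α V μ γ β Mstar Cstar : ℝ)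
    (hα : 0 < α) (hV : 0 < V) (hμ : 0 < μ) (hβ : 0 < β)
    (hMstar : 0 < Mstar)
    (heq1 : α * V * Cstar ^ 2 = μ * Mstar)
    (heq2 : γ = β * Cstar + V * Cstar * Mstar)
    (M C : ℝ → ℝ)
    (hM : ∀ t, 0 ≤ t → HasDerivAt M (α * V * C t ^ 2 - μ * M t) t)
    (hC : ∀ t, 0 ≤ t → HasDerivAt C (γ - β * C t - V * C t * M t) t) :
    (∀ t, 0 ≤ t → HasDerivAt
      (fun s => (M s - Mstar) ^ 2 + 2 * α * (C s - Cstar) ^ 2)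
      (-2 * μ * (M t - Mstar) ^ 2 - 4 * α * β * (C t - Cstar) ^ 2 -
        2 * α * V * (C t - Cstar) ^ 2 * (M t + Mstar)) t) ∧
    ((∀ t, 0 ≤ t → 0 ≤ M t) → ∀ t, 0 ≤ t → (M t, C t) ≠ (Mstar, Cstar) →
      -2 * μ * (M t - Mstar) ^ 2 - 4 * α * β * (C t - Cstar) ^ 2 -
        2 * α * V * (C t - Cstar) ^ 2 * (M t + Mstar) < 0) := by
  refine ⟨fun t ht => ?_, fun hMnn t ht hne => ?_⟩
  · rw [← lyapunov_dissipation_eq heq1 heq2]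
    exact (hM t ht).lyapunov α Mstar Cstar (hC t ht)
  · exact lyapunov_dissipation_neg hα hV hμ hβ hMstar.le (hMnn t ht) hne

/-- The Lyapunov function `L(t) = (M(t) − M*)² + 2α(C(t) − C*)²` of the planar system
`M' = α V C² − μ M`, `C' = γ − β C − V C M` satisfies
`L'(t) = −2μ(M − M*)² − 4αβ(C − C*)² − 2αV(C − C*)²(M + M*)`; in particular, if `M ≥ 0`,
then `L' < 0` off the equilibrium. -/
theorem stmt9 (α V μ γ β Mstar Cstar : ℝ)
    (hα : 0 < α) (hV : 0 < V) (hμ : 0 < μ) (hγ : 0 < γ) (hβ : 0 < β)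
    (hMstar : 0 < Mstar) (hCstar : 0 < Cstar)
    (heq1 : α * V * Cstar ^ 2 = μ * Mstar)
    (heq2 : γ = β * Cstar + V * Cstar * Mstar)
    (M C : ℝ → ℝ)
    (hM : ∀ t, 0 ≤ t → HasDerivAt M (α * V * C t ^ 2 - μ * M t) t)
    (hC : ∀ t, 0 ≤ t → HasDerivAt C (γ - β * C t - V * C t * M t) t) :
    (∀ t, 0 ≤ t → HasDerivAt
      (fun s => (M s - Mstar) ^ 2 + 2 * α * (C s - Cstar) ^ 2)
      (-2 * μ * (M t - Mstar) ^ 2 - 4 * α * β * (C t - Cstar) ^ 2 -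
        2 * α * V * (C t - Cstar) ^ 2 * (M t + Mstar)) t) ∧
    ((∀ t, 0 ≤ t → 0 ≤ M t) → ∀ t, 0 ≤ t → (M t, C t) ≠ (Mstar, Cstar) →
      -2 * μ * (M t - Mstar) ^ 2 - 4 * α * β * (C t - Cstar) ^ 2 -
        2 * α * V * (C t - Cstar) ^ 2 * (M t + Mstar) < 0) :=
  stmt9_general α V μ γ β Mstar Cstar hα hV hμ hβ hMstar heq1 heq2 M C hM hC
end

section
/- Let f : [0,∞) → [0,∞) be measurable with ∫₀^∞ (1 + a)·f(a) da < ∞ and ∫₀^∞ f(a)·log(f(a)) da < ∞ (where f·log f is interpreted as 0 where f = 0). Then f·log(f) is Lebesgue integrable on [0,∞), and for every δ > 0: (i) ∫₀^∞ f(a)·|log(f(a))| da ≤ ∫₀^∞ f(a)·(log(f(a)) + δ·a) da + 4/(δ·e); and (ii) with f̃ := f·1_{f ≤ 1}, one has −∫₀^∞ f̃(a)·log(f̃(a)) da ≤ δ·∫₀^∞ a·f̃(a) da + 1/(δ·e). -/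
open MeasureTheory
open Set


lemma log_le_div_exp' {t : ℝ} (ht : 0 < t) : Real.log t ≤ t / Real.exp 1 := by
  have h := Real.log_le_sub_one_of_pos (div_pos ht (Real.exp_pos 1))
  rw [Real.log_div ht.ne' (Real.exp_pos 1).ne', Real.log_exp] at h
  linarith

lemma key' (δ a x : ℝ) (hx : 0 ≤ x) :
    -(x * Real.log x) ≤ δ * a * x + Real.exp (-(δ * a)) / Real.exp 1 := by
  rcases eq_or_lt_of_le hx with h0 | h0
  · rw [← h0]; simp; positivity
  · have hy : (0:ℝ) < Real.exp (-(δ * a)) := Real.exp_pos _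
    have h2 := log_le_div_exp' (div_pos hy h0)
    rw [Real.log_div hy.ne' h0.ne', Real.log_exp] at h2
    have h3 := mul_le_mul_of_nonneg_left h2 hx
    have h4 : x * (Real.exp (-(δ * a)) / x / Real.exp 1)
        = Real.exp (-(δ * a)) / Real.exp 1 := by
      field_simp
    nlinarith [h3, h4]

lemma exp_int' (δ : ℝ) (hδ : 0 < δ) :
    (∫ a in Ioi (0:ℝ), Real.exp (-(δ * a))) = 1 / δ := by
  have h := integral_comp_mul_left_Ioi (fun x => Real.exp (-x)) 0 hδ
  simp only [mul_zero] at h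
  calc (∫ a in Ioi (0:ℝ), Real.exp (-(δ * a))) = δ⁻¹ • ∫ x in Ioi (0:ℝ), Real.exp (-x) := h
    _ = 1 / δ := by rw [integral_exp_neg_Ioi_zero]; simp [one_div]

lemma exp_intOn' (δ : ℝ) (hδ : 0 < δ) :
    IntegrableOn (fun a => Real.exp (-(δ * a))) (Ici (0:ℝ)) := by
  rw [integrableOn_Ici_iff_integrableOn_Ioi]
  simpa [neg_mul] using exp_neg_integrableOn_Ioi 0 hδ

lemma pos_sub_neg' (x : ℝ) : max x 0 - max (-x) 0 = x := by
  rcases le_total 0 x with h | h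
  · rw [max_eq_left h, max_eq_right (neg_nonpos.mpr h)]; ring
  · rw [max_eq_right h, max_eq_left (neg_nonneg.mpr h)]; ring

lemma abs_eq_self_add' (x : ℝ) : |x| = x + 2 * max (-x) 0 := by
  rcases le_total 0 x with h | h
  · rw [abs_of_nonneg h, max_eq_right (neg_nonpos.mpr h)]; ring
  · rw [abs_of_nonpos h, max_eq_left (neg_nonneg.mpr h)]; ring


/-- Entropy control lemma: if `f ≥ 0` on `[0,∞)` has finite first moment `∫ (1+a) f < ∞` and
finite entropy `∫ f log f < ∞`, then `f log f ∈ L¹`, and for every `δ > 0`: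
(i) `∫ f |log f| ≤ ∫ f (log f + δ a) da + 4/(δ e)`;
(ii) with `f̃ = f·1_{f ≤ 1}`, `−∫ f̃ log f̃ ≤ δ ∫ a f̃ + 1/(δ e)`. -/
theorem stmt12 (f : ℝ → ℝ) (hmeas : Measurable f) (hnn : ∀ a, 0 ≤ a → 0 ≤ f a)
    (hmom : (∫⁻ a in Set.Ici (0:ℝ), ENNReal.ofReal ((1 + a) * f a)) < ⊤)
    (hent : (∫⁻ a in Set.Ici (0:ℝ), ENNReal.ofReal (f a * Real.log (f a))) < ⊤) :
    IntegrableOn (fun a => f a * Real.log (f a)) (Set.Ici 0) ∧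
    (∀ δ : ℝ, 0 < δ →
      (∫ a in Set.Ici (0:ℝ), f a * |Real.log (f a)|) ≤
        (∫ a in Set.Ici (0:ℝ), f a * (Real.log (f a) + δ * a)) + 4 / (δ * Real.exp 1)) ∧
    (∀ δ : ℝ, 0 < δ →
      -(∫ a in Set.Ici (0:ℝ),
          (if f a ≤ 1 then f a else 0) * Real.log (if f a ≤ 1 then f a else 0)) ≤
        δ * (∫ a in Set.Ici (0:ℝ), a * (if f a ≤ 1 then f a else 0)) + 1 / (δ * Real.exp 1)) := by
  set g : ℝ → ℝ := fun a => f a * Real.log (f a) with hg_def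
  set ft : ℝ → ℝ := fun a => if f a ≤ 1 then f a else 0 with hft_def
  set N : ℝ → ℝ := fun a => max (-(g a)) 0 with hN_def
  have hg_m : Measurable g := hmeas.mul (Real.measurable_log.comp hmeas)
  have hft_m : Measurable ft :=
    Measurable.ite (measurableSet_le hmeas measurable_const) hmeas measurable_const
  have hN_m : Measurable N := hg_m.neg.max measurable_const
  have hae : ∀ᵐ a ∂(volume.restrict (Ici (0:ℝ))), 0 ≤ a := ae_restrict_mem measurableSet_Ici
  -- integrability of (1+a) f a
  have h1f_int : IntegrableOn (fun a => (1 + a) * f a) (Ici (0:ℝ)) := by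
    refine ⟨((measurable_const.add measurable_id).mul hmeas).aestronglyMeasurable, ?_⟩
    rw [hasFiniteIntegral_iff_ofReal ?_]
    · exact hmom
    · filter_upwards [hae] with a ha
      have := hnn a ha; positivity
  have hf_int : IntegrableOn f (Ici (0:ℝ)) := by
    refine h1f_int.mono' hmeas.aestronglyMeasurable ?_
    filter_upwards [hae] with a ha
    have h := hnn a ha
    rw [Real.norm_eq_abs, abs_of_nonneg h]; nlinarith
  have haf_int : IntegrableOn (fun a => a * f a) (Ici (0:ℝ)) := by
    refine h1f_int.mono' (measurable_id.mul hmeas).aestronglyMeasurable ?_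
    filter_upwards [hae] with a ha
    have h := hnn a ha
    rw [Real.norm_eq_abs, abs_of_nonneg (mul_nonneg ha h)]; nlinarith
  have hft_le : ∀ a, 0 ≤ a → 0 ≤ ft a ∧ ft a ≤ f a := by
    intro a ha
    by_cases hfa : f a ≤ 1 <;> simp [hft_def, hfa, hnn a ha]
  have haft_int : IntegrableOn (fun a => a * ft a) (Ici (0:ℝ)) := by
    refine haf_int.mono' (measurable_id.mul hft_m).aestronglyMeasurable ?_
    filter_upwards [hae] with a ha
    obtain ⟨h1, h2⟩ := hft_le a ha
    rw [Real.norm_eq_abs, abs_of_nonneg (mul_nonneg ha h1)]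
    exact mul_le_mul_of_nonneg_left h2 ha
  -- integrability of N
  have hN_int : IntegrableOn N (Ici (0:ℝ)) := by
    have hdom : IntegrableOn
        (fun a => 1 * (a * f a) + Real.exp (-(1 * a)) / Real.exp 1) (Ici (0:ℝ)) :=
      (haf_int.const_mul 1).add ((exp_intOn' 1 one_pos).div_const _)
    refine hdom.mono' hN_m.aestronglyMeasurable ?_
    filter_upwards [hae] with a ha
    have h := hnn a ha
    rw [Real.norm_eq_abs, abs_of_nonneg (le_max_right _ _)]
    simp only [hN_def, hg_def]
    refine max_le ?_ ?_
    · have := key' 1 a (f a) h; nlinarith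
    · have : (0:ℝ) ≤ Real.exp (-(1 * a)) / Real.exp 1 := by positivity
      nlinarith
  -- integrability of positive part and g
  have hP_int : IntegrableOn (fun a => max (g a) 0) (Ici (0:ℝ)) := by
    refine ⟨(hg_m.max measurable_const).aestronglyMeasurable,
      (hasFiniteIntegral_iff_ofReal (ae_of_all _ fun a => le_max_right _ _)).mpr ?_⟩
    have heq : ∀ a : ℝ, ENNReal.ofReal (max (g a) 0) = ENNReal.ofReal (g a) := by
      intro a
      rcases le_total 0 (g a) with h | h
      · rw [max_eq_left h]
      · rw [max_eq_right h, ENNReal.ofReal_zero, eq_comm, ENNReal.ofReal_eq_zero]; exact h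
    show (∫⁻ a in Ici (0:ℝ), ENNReal.ofReal (max (g a) 0)) < ⊤
    rw [lintegral_congr fun a => heq a]
    exact hent
  have hg_int : IntegrableOn g (Ici (0:ℝ)) := by
    refine (hP_int.sub hN_int).congr (ae_of_all _ fun a => ?_)
    simp only [hN_def]
    exact pos_sub_neg' (g a)
  -- core bound on the integral of the negative part
  have hNcore : ∀ δ : ℝ, 0 < δ → ∀ F : ℝ → ℝ,
      IntegrableOn (fun a => a * F a) (Ici (0:ℝ)) →
      (∀ᵐ a ∂(volume.restrict (Ici (0:ℝ))),
        N a ≤ δ * (a * F a) + Real.exp (-(δ * a)) / Real.exp 1) →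
      (∫ a in Ici (0:ℝ), N a) ≤ δ * (∫ a in Ici (0:ℝ), a * F a) + 1 / (δ * Real.exp 1) := by
    intro δ hδ F hF hb
    have hexp := (exp_intOn' δ hδ).div_const (Real.exp 1)
    have h1 : (∫ a in Ici (0:ℝ), N a) ≤
        ∫ a in Ici (0:ℝ), (δ * (a * F a) + Real.exp (-(δ * a)) / Real.exp 1) :=
      integral_mono_ae hN_int ((hF.const_mul δ).add hexp) hb
    rw [integral_add (hF.const_mul δ) hexp, integral_const_mul, integral_div] at h1
    have h2 : (∫ a in Ici (0:ℝ), Real.exp (-(δ * a))) = 1 / δ := by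
      rw [integral_Ici_eq_integral_Ioi]; exact exp_int' δ hδ
    rw [h2] at h1
    have h3 : 1 / δ / Real.exp 1 = 1 / (δ * Real.exp 1) := div_div 1 δ (Real.exp 1)
    linarith
  refine ⟨hg_int, ?_, ?_⟩
  · -- part (i)
    intro δ hδ
    have hNb : ∀ᵐ a ∂(volume.restrict (Ici (0:ℝ))),
        N a ≤ δ / 2 * (a * f a) + Real.exp (-(δ / 2 * a)) / Real.exp 1 := by
      filter_upwards [hae] with a ha
      simp only [hN_def, hg_def]
      refine max_le ?_ ?_
      · have := key' (δ / 2) a (f a) (hnn a ha); nlinarith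
      · have h0 : (0:ℝ) ≤ Real.exp (-(δ / 2 * a)) / Real.exp 1 := by positivity
        have h1 : (0:ℝ) ≤ δ / 2 * (a * f a) :=
          mul_nonneg (by linarith) (mul_nonneg ha (hnn a ha))
        linarith
    have hN2 := hNcore (δ / 2) (by linarith) f haf_int hNb
    have hLHS : (∫ a in Ici (0:ℝ), f a * |Real.log (f a)|)
        = (∫ a in Ici (0:ℝ), g a) + 2 * ∫ a in Ici (0:ℝ), N a := by
      have hpt : ∀ᵐ a ∂(volume.restrict (Ici (0:ℝ))),
          f a * |Real.log (f a)| = g a + 2 * N a := by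
        filter_upwards [hae] with a ha
        simp only [hN_def, hg_def]
        rw [show f a * |Real.log (f a)| = |f a * Real.log (f a)| by
          rw [abs_mul, abs_of_nonneg (hnn a ha)]]
        exact abs_eq_self_add' _
      rw [integral_congr_ae hpt, integral_add hg_int (hN_int.const_mul 2),
        integral_const_mul]
    have hRHS : (∫ a in Ici (0:ℝ), f a * (Real.log (f a) + δ * a))
        = (∫ a in Ici (0:ℝ), g a) + δ * ∫ a in Ici (0:ℝ), a * f a := by
      have hpt : ∀ a : ℝ, f a * (Real.log (f a) + δ * a) = g a + δ * (a * f a) := by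
        intro a; simp only [hg_def]; ring
      rw [integral_congr_ae (ae_of_all _ hpt), integral_add hg_int (haf_int.const_mul δ),
        integral_const_mul]
    rw [hLHS, hRHS]
    have harith : 2 * (1 / (δ / 2 * Real.exp 1)) = 4 / (δ * Real.exp 1) := by
      rw [div_mul_eq_mul_div, mul_comm, ← div_div]
      field_simp
      ring
    linarith
  · -- part (ii)
    intro δ hδ
    have hfteq : ∀ᵐ a ∂(volume.restrict (Ici (0:ℝ))),
        ft a * Real.log (ft a) = -(N a) := by
      filter_upwards [hae] with a ha
      simp only [hN_def, hg_def, hft_def]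
      by_cases hfa : f a ≤ 1
      · simp only [if_pos hfa]
        have hgle : f a * Real.log (f a) ≤ 0 :=
          mul_nonpos_of_nonneg_of_nonpos (hnn a ha) (Real.log_nonpos (hnn a ha) hfa)
        rw [max_eq_left (by linarith)]; ring
      · simp only [if_neg hfa]
        have hgge : 0 ≤ f a * Real.log (f a) :=
          mul_nonneg (hnn a ha) (Real.log_nonneg (le_of_not_ge hfa))
        rw [max_eq_right (by linarith)]
        simp
    have hNb : ∀ᵐ a ∂(volume.restrict (Ici (0:ℝ))),
        N a ≤ δ * (a * ft a) + Real.exp (-(δ * a)) / Real.exp 1 := by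
      filter_upwards [hfteq, hae] with a he ha
      obtain ⟨h1, _⟩ := hft_le a ha
      have hk := key' δ a (ft a) h1
      have hNa : N a = -(ft a * Real.log (ft a)) := by rw [he]; ring
      rw [hNa]; nlinarith [hk]
    have h := hNcore δ hδ ft haft_int hNb
    have hIeq : (∫ a in Ici (0:ℝ), ft a * Real.log (ft a))
        = -(∫ a in Ici (0:ℝ), N a) := by
      rw [integral_congr_ae hfteq, integral_neg]
    have hfin : -(∫ a in Ici (0:ℝ), ft a * Real.log (ft a)) ≤
        δ * (∫ a in Ici (0:ℝ), a * ft a) + 1 / (δ * Real.exp 1) := by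
      rw [hIeq, neg_neg]; exact h
    simpa only [hft_def] using hfin
end

section
/- Let V : [0,∞) → (0,∞) be continuous, μ : [0,∞) → [0,∞) continuous and bounded, f : [0,∞) → ℝ continuous, and C : [0,∞) → (0,∞) continuous with C(t) → C̃ as t → ∞ for some C̃ > 0. Define Θ(a) = ∫₀^a du/V(u) and h(t) = ∫₀^t C(s) ds, and let h⁻¹ : [0,∞) → [0,∞) denote the inverse of h (which is a strictly increasing bijection of [0,∞) onto itself). Then for every a ≥ 0, as t → ∞, the quantity (V(0)/V(a)) · f(C(h⁻¹(h(t) − Θ(a)))) · exp(−∫₀^a [μ(v)/V(v)] · [1/C(h⁻¹(h(t) + Θ(v) − Θ(a)))] dv) converges to (V(0)/V(a)) · f(C̃) · exp(−(1/C̃)·∫₀^a μ(v)/V(v) dv). -/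
/-!
Along the characteristics the argument of `C` is `h⁻¹(h t + Θ v - Θ a) ≥ h⁻¹(h t - Θ a)`,
which tends to infinity uniformly in `v ∈ [0, a]` because `Θ ≥ 0` and both `h` and `h⁻¹`
tend to infinity. Hence `1 / C` of it tends
to `1 / C̃` uniformly, and the exponent converges by dominated convergence against the
integrable weight `μ / V`; the boundary factor converges by continuity of `f` at `C̃ > 0`.
-/

open Filter Set MeasureTheory Topology
open scoped Interval

section RightInverse

variable {α β : Type*} [LinearOrder α] [LinearOrder β] {f : α → β} {g : β → α} {a : α} {b : β}

theorem tendsto_atTop_of_monotoneOn_of_rightInvOn (hf : MonotoneOn f (Ici a))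
    (hg : MapsTo g (Ici b) (Ici a)) (hfg : RightInvOn g f (Ici b)) :
    Tendsto f atTop atTop := by
  refine tendsto_atTop.2 fun M => ?_
  have hM : max M b ∈ Ici b := le_max_right M b
  filter_upwards [eventually_ge_atTop (g (max M b))] with x hx
  calc M ≤ max M b := le_max_left M b
    _ = f (g (max M b)) := (hfg hM).symm
    _ ≤ f x := hf (hg hM) (le_trans (hg hM) hx) hx

theorem tendsto_atTop_of_rightInvOn_of_strictMonoOn (hf : StrictMonoOn f (Ici a))
    (hg : MapsTo g (Ici b) (Ici a)) (hfg : RightInvOn g f (Ici b)) :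
    Tendsto g atTop atTop := by
  refine tendsto_atTop.2 fun M => ?_
  have hM : max M a ∈ Ici a := le_max_right M a
  filter_upwards [eventually_ge_atTop (max (f (max M a)) b)] with y hy
  have hyb : y ∈ Ici b := le_of_max_le_right hy
  refine le_trans (le_max_left M a) (not_lt.1 fun hlt => ?_)
  have hlt' := hf (hg hyb) hM hlt
  rw [hfg hyb] at hlt'
  exact hlt'.not_ge (le_of_max_le_left hy)

end RightInverse

theorem monotoneOn_primitive_of_nonneg {g : ℝ → ℝ} {a : ℝ}
    (hint : ∀ x ∈ Ici a, IntervalIntegrable g volume a x) (hg : ∀ x ∈ Ici a, 0 ≤ g x) :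
    MonotoneOn (fun x => ∫ u in a..x, g u) (Ici a) := fun _ hx y hy hxy =>
  intervalIntegral.integral_mono_interval le_rfl hx hxy
    ((ae_restrict_iff' measurableSet_Ioc).2 (ae_of_all _ fun u hu => hg u (le_of_lt hu.1)))
    (hint y hy)

theorem ContinuousOn.aemeasurable_comp_of_monotoneOn {μ : Measure ℝ} {φ ψ : ℝ → ℝ} {s t : Set ℝ}
    (hφ : ContinuousOn φ t) (ht : MeasurableSet t) (hs : MeasurableSet s)
    (hψ : MonotoneOn ψ s) (hψst : MapsTo ψ s t) :
    AEMeasurable (fun x => φ (ψ x)) (μ.restrict s) := by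
  classical
  have hmeas : Measurable (t.piecewise φ fun _ => 0) :=
    hφ.measurable_piecewise continuousOn_const ht
  refine (hmeas.comp_aemeasurable (aemeasurable_restrict_of_monotoneOn hs hψ)).congr ?_
  filter_upwards [ae_restrict_mem hs] with x hx
  exact piecewise_eq_of_mem _ _ _ (hψst hx)

theorem Filter.Tendsto.tendstoUniformlyOn_comp {ι α β γ : Type*} [UniformSpace γ] {G : β → γ}
    {l : Filter β} {c : γ} (hG : Tendsto G l (𝓝 c)) {φ : ι → α → β} {p : Filter ι} {s : Set α}
    (hφ : Tendsto (Function.uncurry φ) (p ×ˢ 𝓟 s) l) :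
    TendstoUniformlyOn (fun i x => G (φ i x)) (fun _ => c) p s :=
  tendstoUniformlyOn_iff_tendsto.2 (Uniform.tendsto_nhds_right.1 (hG.comp hφ))

theorem tendsto_intervalIntegral_mul_of_tendstoUniformlyOn {ι : Type*} {l : Filter ι}
    [l.IsCountablyGenerated] {μ : Measure ℝ} {w : ℝ → ℝ} {F : ι → ℝ → ℝ} {c a b : ℝ}
    (hw : IntervalIntegrable w μ a b)
    (hF_meas : ∀ᶠ i in l, AEStronglyMeasurable (F i) (μ.restrict (Ι a b)))
    (hF : TendstoUniformlyOn F (fun _ => c) l (Ι a b)) :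
    Tendsto (fun i => ∫ x in a..b, w x * F i x ∂μ) l (𝓝 (∫ x in a..b, w x * c ∂μ)) := by
  refine intervalIntegral.tendsto_integral_filter_of_dominated_convergence
    (fun x => |w x| * (|c| + 1)) ?_ ?_ (hw.abs.mul_const _) ?_
  · exact hF_meas.mono fun i hi => hw.def'.aestronglyMeasurable.mul hi
  · filter_upwards [Metric.tendstoUniformlyOn_iff.1 hF 1 one_pos] with i hi
    refine ae_of_all _ fun x hx => ?_
    have hFc : |F i x| ≤ |c| + 1 := by
      have := hi x hx
      rw [Real.dist_eq] at this
      linarith [abs_sub_abs_le_abs_sub (F i x) c, abs_sub_comm c (F i x)]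
    rw [norm_mul, Real.norm_eq_abs, Real.norm_eq_abs]
    gcongr
  · exact ae_of_all _ fun x hx => (hF.tendsto_at hx).const_mul (w x)

theorem tendsto_comp_sub_atTop {h g : ℝ → ℝ} (c : ℝ) (hh : Tendsto h atTop atTop)
    (hg : Tendsto g atTop atTop) : Tendsto (fun t => g (h t - c)) atTop atTop := by
  simp_rw [sub_eq_add_neg]
  exact hg.comp (tendsto_atTop_add_const_right _ (-c) hh)

theorem tendsto_comp_add_sub_prod_atTop {h g Θ : ℝ → ℝ} {s : Set ℝ} (c : ℝ)
    (hh : Tendsto h atTop atTop) (hg : Tendsto g atTop atTop) (hg_mono : MonotoneOn g (Ici 0))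
    (hΘ : ∀ v ∈ s, 0 ≤ Θ v) :
    Tendsto (fun p : ℝ × ℝ => g (h p.1 + Θ p.2 - c)) (atTop ×ˢ 𝓟 s) atTop := by
  refine tendsto_atTop_mono' _ ?_ ((tendsto_comp_sub_atTop c hh hg).comp tendsto_fst)
  have hev : ∀ᶠ p : ℝ × ℝ in atTop ×ˢ 𝓟 s, c ≤ h p.1 ∧ p.2 ∈ s :=
    eventually_prod_principal_iff.2 <| by
      filter_upwards [hh.eventually_ge_atTop c] with t ht v hv using ⟨ht, hv⟩
  filter_upwards [hev] with p ⟨hp, hps⟩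
  have := hΘ _ hps
  exact hg_mono (sub_nonneg.2 hp) (show 0 ≤ h p.1 + Θ p.2 - c by linarith) (by linarith)

theorem tendsto_integral_along_characteristics {w C g h Θ : ℝ → ℝ} {a Ctilde : ℝ} (ha : 0 ≤ a)
    (hw : IntervalIntegrable w volume 0 a) (hC : ContinuousOn C (Ici 0))
    (hClim : Tendsto C atTop (𝓝 Ctilde)) (hCtilde : Ctilde ≠ 0)
    (hh : Tendsto h atTop atTop) (hg : Tendsto g atTop atTop) (hg_mono : MonotoneOn g (Ici 0))
    (hg_maps : MapsTo g (Ici 0) (Ici 0)) (hΘ_mono : MonotoneOn Θ (Ici 0))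
    (hΘ_nonneg : ∀ v ∈ Ici 0, 0 ≤ Θ v) :
    Tendsto (fun t => ∫ v in (0:ℝ)..a, w v * (1 / C (g (h t + Θ v - Θ a)))) atTop
      (𝓝 (∫ v in (0:ℝ)..a, w v * (1 / Ctilde))) := by
  refine tendsto_intervalIntegral_mul_of_tendstoUniformlyOn hw ?_ ?_ <;> rw [uIoc_of_le ha]
  · -- `C ∘ g` need not be measurable, but `v ↦ g (h t + Θ v - Θ a)` is monotone
    filter_upwards [hh.eventually_ge_atTop (Θ a)] with t ht
    have harg : MapsTo (fun v => h t + Θ v - Θ a) (Ioc 0 a) (Ici 0) := fun v hv => by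
      have := hΘ_nonneg v hv.1.le
      simp only [mem_Ici]
      linarith
    have harg_mono : MonotoneOn (fun v => h t + Θ v - Θ a) (Ioc 0 a) := fun v hv w hw hvw => by
      have := hΘ_mono hv.1.le hw.1.le hvw
      simp only
      linarith
    exact ((hC.aemeasurable_comp_of_monotoneOn measurableSet_Ici measurableSet_Ioc
      (hg_mono.comp harg_mono harg) (hg_maps.comp harg)).const_div 1).aestronglyMeasurable
  · exact (tendsto_const_nhds.div hClim hCtilde).tendstoUniformlyOn_comp
      (tendsto_comp_add_sub_prod_atTop (Θ a) hh hg hg_mono fun v hv => hΘ_nonneg v hv.1.le)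

theorem stmt15_general (V μ f C : ℝ → ℝ) (Ctilde : ℝ) (hCtilde : 0 < Ctilde)
    (hVcont : ContinuousOn V (Set.Ici 0)) (hVpos : ∀ a, 0 ≤ a → 0 < V a)
    (hμcont : ContinuousOn μ (Set.Ici 0))
    (hfcont : ContinuousOn f (Set.Ici 0))
    (hCcont : ContinuousOn C (Set.Ici 0))
    (hClim : Tendsto C atTop (nhds Ctilde))
    (Θ h hinv : ℝ → ℝ)
    (hΘ : ∀ a, Θ a = ∫ u in (0:ℝ)..a, 1 / V u)
    (hmono : StrictMonoOn h (Set.Ici 0))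
    (hinv_right : ∀ y, 0 ≤ y → 0 ≤ hinv y ∧ h (hinv y) = y) :
    ∀ a, 0 ≤ a →
      Tendsto (fun t =>
        (V 0 / V a) * f (C (hinv (h t - Θ a))) *
          Real.exp (-(∫ v in (0:ℝ)..a, (μ v / V v) * (1 / C (hinv (h t + Θ v - Θ a))))))
        atTop
        (nhds ((V 0 / V a) * f Ctilde *
          Real.exp (-(1 / Ctilde) * ∫ v in (0:ℝ)..a, μ v / V v))) := by
  intro a ha
  have hinv_maps : MapsTo hinv (Ici 0) (Ici 0) := fun y hy => (hinv_right y hy).1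
  have hinv_rinv : RightInvOn hinv h (Ici 0) := fun y hy => (hinv_right y hy).2
  have h_top := tendsto_atTop_of_monotoneOn_of_rightInvOn hmono.monotoneOn hinv_maps hinv_rinv
  have hinv_top := tendsto_atTop_of_rightInvOn_of_strictMonoOn hmono hinv_maps hinv_rinv
  have hinv_mono := Function.monotoneOn_of_rightInvOn_of_mapsTo hmono.monotoneOn hinv_rinv hinv_maps
  have huIcc : ∀ x ∈ Ici (0 : ℝ), [[0, x]] ⊆ Ici 0 := fun x hx => by
    rw [uIcc_of_le hx]; exact Icc_subset_Ici_self
  have hΘ_mono : MonotoneOn Θ (Ici 0) := by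
    rw [funext hΘ]
    exact monotoneOn_primitive_of_nonneg
      (fun x hx => ((continuousOn_const.div hVcont fun y hy => (hVpos y hy).ne').mono
        (huIcc x hx)).intervalIntegrable)
      (fun x hx => (one_div_pos.2 (hVpos x hx)).le)
  have hΘ_nonneg : ∀ v ∈ Ici (0 : ℝ), 0 ≤ Θ v := fun v hv => by
    simpa [hΘ 0] using hΘ_mono (mem_Ici.2 le_rfl) hv hv
  have hboundary : Tendsto (fun t => f (C (hinv (h t - Θ a)))) atTop (𝓝 (f Ctilde)) :=
    (hfcont.continuousAt (Ici_mem_nhds hCtilde)).tendsto.comp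
      (hClim.comp (tendsto_comp_sub_atTop (Θ a) h_top hinv_top))
  have hexponent := tendsto_integral_along_characteristics ha
    ((hμcont.div hVcont fun y hy => (hVpos y hy).ne').mono (huIcc a ha)).intervalIntegrable
    hCcont hClim hCtilde.ne' h_top hinv_top hinv_mono hinv_maps hΘ_mono hΘ_nonneg
  rw [intervalIntegral.integral_mul_const, mul_comm] at hexponent
  rw [neg_mul]
  exact (hboundary.const_mul _).mul ((Real.continuous_exp.tendsto _).comp hexponent.neg)

/-- Pointwise long-time convergence of the characteristic representation of the solution:
with `Θ(a) = ∫₀^a du/V(u)`, `h(t) = ∫₀^t C(s) ds` and `h⁻¹` the inverse of the strictly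
increasing bijection `h : [0,∞) → [0,∞)`, for every `a ≥ 0`,
`(V(0)/V(a)) f(C(h⁻¹(h(t) − Θ(a)))) exp(−∫₀^a (μ(v)/V(v)) / C(h⁻¹(h(t) + Θ(v) − Θ(a))) dv)`
converges, as `t → ∞`, to `(V(0)/V(a)) f(C̃) exp(−(1/C̃)∫₀^a μ(v)/V(v) dv)`. -/
theorem stmt15 (V μ f C : ℝ → ℝ) (Ctilde : ℝ) (hCtilde : 0 < Ctilde)
    (hVcont : ContinuousOn V (Set.Ici 0)) (hVpos : ∀ a, 0 ≤ a → 0 < V a)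
    (hμcont : ContinuousOn μ (Set.Ici 0)) (hμnn : ∀ a, 0 ≤ a → 0 ≤ μ a)
    (hμbdd : ∃ Mb : ℝ, ∀ a, 0 ≤ a → μ a ≤ Mb)
    (hfcont : ContinuousOn f (Set.Ici 0))
    (hCcont : ContinuousOn C (Set.Ici 0)) (hCpos : ∀ t, 0 ≤ t → 0 < C t)
    (hClim : Tendsto C atTop (nhds Ctilde))
    (Θ h hinv : ℝ → ℝ)
    (hΘ : ∀ a, Θ a = ∫ u in (0:ℝ)..a, 1 / V u)
    (hh : ∀ t, h t = ∫ s in (0:ℝ)..t, C s)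
    (hmono : StrictMonoOn h (Set.Ici 0))
    (hinv_left : ∀ t, 0 ≤ t → hinv (h t) = t)
    (hinv_right : ∀ y, 0 ≤ y → 0 ≤ hinv y ∧ h (hinv y) = y) :
    ∀ a, 0 ≤ a →
      Tendsto (fun t =>
        (V 0 / V a) * f (C (hinv (h t - Θ a))) *
          Real.exp (-(∫ v in (0:ℝ)..a, (μ v / V v) * (1 / C (hinv (h t + Θ v - Θ a))))))
        atTop
        (nhds ((V 0 / V a) * f Ctilde *
          Real.exp (-(1 / Ctilde) * ∫ v in (0:ℝ)..a, μ v / V v))) :=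
  stmt15_general V μ f C Ctilde hCtilde hVcont hVpos hμcont hfcont hCcont hClim Θ h hinv hΘ hmono
    hinv_right
end

section
/- For all λ > 0, δ > 0 and x > 0, ∫₀^x e^{λ·a}/(1 + δ·a) da ≥ (log(1 + δ·x)/δ) · exp(λ·x/log(1 + δ·x) − λ/δ). -/
/-!
Jensen's inequality for `exp` with respect to the weight `da / (1 + δ a)` on `[0, x]`, whose mass is
`log (1 + δ x) / δ` and under which the mean of `λ a` is `λ x / log (1 + δ x) - λ / δ`.
Jensen itself is obtained by integrating the tangent-line bound `exp u ≥ exp c * (1 + u - c)`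
at the mean `c`.
-/

open Real Set MeasureTheory

theorem exp_mul_one_add_sub_le_exp (c u : ℝ) : exp c * (1 + u - c) ≤ exp u := by
  calc exp c * (1 + u - c) ≤ exp c * exp (u - c) := by
        gcongr
        linarith [add_one_le_exp (u - c)]
    _ = exp u := by rw [← exp_add, add_sub_cancel]

theorem integral_mul_exp_weighted_mean_le {w f : ℝ → ℝ} {a b : ℝ} (hab : a ≤ b)
    (hw : ∀ t ∈ Icc a b, 0 ≤ w t) (hw_int : IntervalIntegrable w volume a b)
    (hfw_int : IntervalIntegrable (fun t => f t * w t) volume a b)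
    (hexp_int : IntervalIntegrable (fun t => exp (f t) * w t) volume a b) :
    (∫ t in a..b, w t) * exp ((∫ t in a..b, f t * w t) / ∫ t in a..b, w t) ≤
      ∫ t in a..b, exp (f t) * w t := by
  set m := ∫ t in a..b, w t
  set c := (∫ t in a..b, f t * w t) / m
  rcases eq_or_ne m 0 with hm | hm
  · rw [hm, zero_mul]
    exact intervalIntegral.integral_nonneg hab fun t ht => mul_nonneg (exp_pos _).le (hw t ht)
  have h_tangent_integral :
      ∫ t in a..b, exp c * ((1 - c) * w t + f t * w t) = m * exp c := by
    have hcm : c * m = ∫ t in a..b, f t * w t := div_mul_cancel₀ _ hm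
    rw [intervalIntegral.integral_const_mul,
      intervalIntegral.integral_add (hw_int.const_mul _) hfw_int,
      intervalIntegral.integral_const_mul]
    linear_combination (-exp c) * hcm
  rw [← h_tangent_integral]
  refine intervalIntegral.integral_mono_on hab ((hw_int.const_mul _).add hfw_int |>.const_mul _)
    hexp_int fun t ht => ?_
  calc exp c * ((1 - c) * w t + f t * w t) = exp c * (1 + f t - c) * w t := by ring
    _ ≤ exp (f t) * w t := by gcongr; exacts [hw t ht, exp_mul_one_add_sub_le_exp c (f t)]

theorem one_add_mul_pos_of_mem_uIcc {δ x a : ℝ} (hx : 0 < 1 + δ * x) (ha : a ∈ uIcc 0 x) :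
    0 < 1 + δ * a := by
  rcases mem_uIcc.1 ha with ⟨h0, h1⟩ | ⟨h0, h1⟩ <;> rcases le_total 0 δ with hδ | hδ <;> nlinarith

theorem integral_inv_one_add_mul {δ x : ℝ} (hδ : δ ≠ 0) (hx : 0 < 1 + δ * x) :
    ∫ a in 0..x, (1 + δ * a)⁻¹ = log (1 + δ * x) / δ := by
  rw [intervalIntegral.integral_comp_add_mul (fun u => u⁻¹) hδ, mul_zero, add_zero,
    integral_inv_of_pos one_pos hx, div_one, smul_eq_mul, inv_mul_eq_div]

theorem integral_mul_inv_one_add_mul {δ x : ℝ} (hδ : δ ≠ 0) (hx : 0 < 1 + δ * x) :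
    ∫ a in 0..x, a * (1 + δ * a)⁻¹ = (x - log (1 + δ * x) / δ) / δ := by
  have hpos a (ha : a ∈ uIcc 0 x) := one_add_mul_pos_of_mem_uIcc hx ha
  have h_inv_int : IntervalIntegrable (fun a => (1 + δ * a)⁻¹) volume 0 x :=
    (ContinuousOn.inv₀ (by fun_prop) fun a ha => (hpos a ha).ne').intervalIntegrable
  calc ∫ a in 0..x, a * (1 + δ * a)⁻¹ = ∫ a in 0..x, δ⁻¹ * (1 - (1 + δ * a)⁻¹) := by
        refine intervalIntegral.integral_congr fun a ha => ?_
        have ha_ne := (hpos a ha).ne'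
        rw [eq_inv_mul_iff_mul_eq₀ hδ, eq_sub_iff_add_eq, ← mul_assoc, ← add_one_mul, add_comm,
          mul_inv_cancel₀ ha_ne]
    _ = (x - log (1 + δ * x) / δ) / δ := by
        rw [intervalIntegral.integral_const_mul, intervalIntegral.integral_sub
          intervalIntegrable_const h_inv_int, integral_inv_one_add_mul hδ hx]
        simp only [intervalIntegral.integral_const, sub_zero, smul_eq_mul, mul_one]
        ring

theorem stmt17_general (lam δ x : ℝ) (hδ : 0 < δ) (hx : 0 < x) :
    (Real.log (1 + δ * x) / δ) * Real.exp (lam * x / Real.log (1 + δ * x) - lam / δ) ≤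
      ∫ a in (0:ℝ)..x, Real.exp (lam * a) / (1 + δ * a) := by
  have h1x : 0 < 1 + δ * x := by positivity
  have hpos a (ha : a ∈ uIcc 0 x) := one_add_mul_pos_of_mem_uIcc h1x ha
  have hw_cont : ContinuousOn (fun a => (1 + δ * a)⁻¹) (uIcc 0 x) :=
    ContinuousOn.inv₀ (by fun_prop) fun a ha => (hpos a ha).ne'
  have hjensen := integral_mul_exp_weighted_mean_le (w := fun a => (1 + δ * a)⁻¹)
    (f := fun a => lam * a) hx.le (fun a ha => (inv_pos.2 (hpos a (Icc_subset_uIcc ha))).le)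
    hw_cont.intervalIntegrable (((continuous_const.mul continuous_id).continuousOn.mul
      hw_cont).intervalIntegrable)
    (((continuous_const.mul continuous_id).rexp.continuousOn.mul hw_cont).intervalIntegrable)
  have hL : log (1 + δ * x) ≠ 0 := (log_pos (lt_add_of_pos_right 1 (mul_pos hδ hx))).ne'
  have hmoment : ∫ a in 0..x, lam * a * (1 + δ * a)⁻¹ = lam * ((x - log (1 + δ * x) / δ) / δ) := by
    simp_rw [mul_assoc]
    rw [intervalIntegral.integral_const_mul, integral_mul_inv_one_add_mul hδ.ne' h1x]
  have hmean : lam * ((x - log (1 + δ * x) / δ) / δ) / (log (1 + δ * x) / δ) =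
      lam * x / log (1 + δ * x) - lam / δ := by
    generalize log (1 + δ * x) = L at hL ⊢
    field_simp
  rw [integral_inv_one_add_mul hδ.ne' h1x, hmoment, hmean] at hjensen
  simpa only [div_eq_mul_inv] using hjensen

/-- Jensen-type inequality: for `λ, δ, x > 0`,
`∫₀^x e^{λa}/(1 + δa) da ≥ (log(1 + δx)/δ) · exp(λx/log(1 + δx) − λ/δ)`. -/
theorem stmt17 (lam δ x : ℝ) (hlam : 0 < lam) (hδ : 0 < δ) (hx : 0 < x) :
    (Real.log (1 + δ * x) / δ) * Real.exp (lam * x / Real.log (1 + δ * x) - lam / δ) ≤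
      ∫ a in (0:ℝ)..x, Real.exp (lam * a) / (1 + δ * a) :=
  stmt17_general lam δ x hδ hx
end

section
/- Let δ, λ, μ, γ, σ_m > 0 and define V(a) = (1 + δ·a)·e^{−λ·a} for a ≥ 0. If either (i) 2δ ≥ λ and μ/γ + σ_m·γ/min(1, λ/δ) ≤ δ·e^{−2 + λ/δ}, or (ii) 2δ < λ and δ + μ/γ < λ, then there exists a* ≥ 0 such that V'(a*) + μ/γ ≤ 0. Moreover, in case (i) one may take a* = 2/λ − 1/δ, for which V'(a*) = −δ·e^{−2 + λ/δ}, and in case (ii) one may take a* = 0, for which V'(0) = δ − λ. -/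
open Real

theorem hasDerivAt_one_add_mul_mul_exp_neg_mul (δ lam a : ℝ) :
    HasDerivAt (fun a => (1 + δ * a) * exp (-(lam * a)))
      ((δ - lam * (1 + δ * a)) * exp (-(lam * a))) a := by
  have hlin : HasDerivAt (fun a => 1 + δ * a) δ a := by
    simpa using ((hasDerivAt_id a).const_mul δ).const_add 1
  have hexp : HasDerivAt (fun a => exp (-(lam * a))) (exp (-(lam * a)) * -lam) a := by
    simpa using (((hasDerivAt_id a).const_mul lam).neg).exp
  exact (hlin.mul hexp).congr_deriv (by ring)

theorem deriv_one_add_mul_mul_exp_neg_mul (δ lam a : ℝ) :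
    deriv (fun a => (1 + δ * a) * exp (-(lam * a))) a =
      (δ - lam * (1 + δ * a)) * exp (-(lam * a)) :=
  (hasDerivAt_one_add_mul_mul_exp_neg_mul δ lam a).deriv

theorem deriv_one_add_mul_mul_exp_neg_mul_zero (δ lam : ℝ) :
    deriv (fun a => (1 + δ * a) * exp (-(lam * a))) 0 = δ - lam := by
  simp [deriv_one_add_mul_mul_exp_neg_mul]

/-- `2/λ − 1/δ` is where `V'` attains its minimum, since `V''(a) = λ(λδa + λ − 2δ)e^{−λa}`. -/
theorem deriv_one_add_mul_mul_exp_neg_mul_two_div_sub_one_div {δ lam : ℝ} (hδ : δ ≠ 0)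
    (hlam : lam ≠ 0) :
    deriv (fun a => (1 + δ * a) * exp (-(lam * a))) (2 / lam - 1 / δ) =
      -(δ * exp (-2 + lam / δ)) := by
  have harg : -(lam * (2 / lam - 1 / δ)) = -2 + lam / δ := by
    field_simp
    ring
  have hcoeff : δ - lam * (1 + δ * (2 / lam - 1 / δ)) = -δ := by
    field_simp
    ring
  rw [deriv_one_add_mul_mul_exp_neg_mul, harg, hcoeff, neg_mul]

theorem stmt19_general (δ lam μ γ σ : ℝ)
    (hδ : 0 < δ) (hlam : 0 < lam) (hγ : 0 < γ) (hσ : 0 < σ)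
    (V : ℝ → ℝ) (hV : ∀ a, V a = (1 + δ * a) * Real.exp (-(lam * a))) :
    (((2 * δ ≥ lam ∧ μ / γ + σ * γ / min 1 (lam / δ) ≤ δ * Real.exp (-2 + lam / δ)) ∨
        (2 * δ < lam ∧ δ + μ / γ < lam)) →
      ∃ a : ℝ, 0 ≤ a ∧ deriv V a + μ / γ ≤ 0) ∧
    ((2 * δ ≥ lam ∧ μ / γ + σ * γ / min 1 (lam / δ) ≤ δ * Real.exp (-2 + lam / δ)) →
      0 ≤ 2 / lam - 1 / δ ∧
      deriv V (2 / lam - 1 / δ) = -(δ * Real.exp (-2 + lam / δ)) ∧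
      deriv V (2 / lam - 1 / δ) + μ / γ ≤ 0) ∧
    ((2 * δ < lam ∧ δ + μ / γ < lam) →
      deriv V 0 = δ - lam ∧ deriv V 0 + μ / γ ≤ 0) := by
  have hVfun : V = fun a => (1 + δ * a) * exp (-(lam * a)) := funext hV
  have case_i : 2 * δ ≥ lam ∧ μ / γ + σ * γ / min 1 (lam / δ) ≤ δ * exp (-2 + lam / δ) →
      0 ≤ 2 / lam - 1 / δ ∧
      deriv V (2 / lam - 1 / δ) = -(δ * exp (-2 + lam / δ)) ∧
      deriv V (2 / lam - 1 / δ) + μ / γ ≤ 0 := by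
    rintro ⟨hlam_le, hbound⟩
    have hmin : 0 < σ * γ / min 1 (lam / δ) := by positivity
    have hderiv : deriv V (2 / lam - 1 / δ) = -(δ * exp (-2 + lam / δ)) :=
      hVfun ▸ deriv_one_add_mul_mul_exp_neg_mul_two_div_sub_one_div hδ.ne' hlam.ne'
    refine ⟨?_, hderiv, by linarith⟩
    rw [sub_nonneg, div_le_div_iff₀ hδ hlam]
    linarith
  have case_ii : 2 * δ < lam ∧ δ + μ / γ < lam →
      deriv V 0 = δ - lam ∧ deriv V 0 + μ / γ ≤ 0 := by
    rintro ⟨-, hlt⟩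
    have hderiv : deriv V 0 = δ - lam := hVfun ▸ deriv_one_add_mul_mul_exp_neg_mul_zero δ lam
    exact ⟨hderiv, by linarith⟩
  refine ⟨?_, case_i, case_ii⟩
  rintro (h | h)
  · exact ⟨_, (case_i h).1, (case_i h).2.2⟩
  · exact ⟨0, le_rfl, (case_ii h).2⟩

/-- Sufficient criteria for a vulnerable plaque: with `V(a) = (1 + δa)e^{−λa}`, if either
(i) `2δ ≥ λ` and `μ/γ + σ_m γ/min(1, λ/δ) ≤ δ e^{−2 + λ/δ}`, or (ii) `2δ < λ` and
`δ + μ/γ < λ`, then `V'(a*) + μ/γ ≤ 0` for some `a* ≥ 0`; in case (i) one may take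
`a* = 2/λ − 1/δ`, where `V'(a*) = −δ e^{−2 + λ/δ}`, and in case (ii) `a* = 0`, where
`V'(0) = δ − λ`. -/
theorem stmt19 (δ lam μ γ σ : ℝ)
    (hδ : 0 < δ) (hlam : 0 < lam) (hμ : 0 < μ) (hγ : 0 < γ) (hσ : 0 < σ)
    (V : ℝ → ℝ) (hV : ∀ a, V a = (1 + δ * a) * Real.exp (-(lam * a))) :
    (((2 * δ ≥ lam ∧ μ / γ + σ * γ / min 1 (lam / δ) ≤ δ * Real.exp (-2 + lam / δ)) ∨
        (2 * δ < lam ∧ δ + μ / γ < lam)) →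
      ∃ a : ℝ, 0 ≤ a ∧ deriv V a + μ / γ ≤ 0) ∧
    ((2 * δ ≥ lam ∧ μ / γ + σ * γ / min 1 (lam / δ) ≤ δ * Real.exp (-2 + lam / δ)) →
      0 ≤ 2 / lam - 1 / δ ∧
      deriv V (2 / lam - 1 / δ) = -(δ * Real.exp (-2 + lam / δ)) ∧
      deriv V (2 / lam - 1 / δ) + μ / γ ≤ 0) ∧
    ((2 * δ < lam ∧ δ + μ / γ < lam) →
      deriv V 0 = δ - lam ∧ deriv V 0 + μ / γ ≤ 0) :=
  stmt19_general δ lam μ γ σ hδ hlam hγ hσ V hV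
end
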